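/- Assume the Chang Conjecture (ω₂,ω₁) ↠ (ω₁,ω). Then there is no sequence ⟨f_α : α < ω₂⟩ of functions f_α : ω₁ → ω₁ which is increasing modulo finite, i.e. such that for all α < β < ω₂ the set {ξ < ω₁ : f_α(ξ) ≥ f_β(ξ)} is finite. -/

import Mathlib

/-!
Colour a pair `α < β < ω₂` by a countable ordinal above the finitely many coordinates `ξ` with
`f_β ξ ≤ f_α ξ`. Chang's property gives an `ω₁`-sequence `α_i` and `ξ₀ < ω₁` with
`f_{α_i} ξ < f_{α_j} ξ` for `i < j` and all `ξ ≥ ξ₀`; a strictly increasing `ω₁`-sequence of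
ordinals dominates its index, so `i ≤ f_{α_i} ξ`. Choose `β < ω₂` above every `α_i` (ω₂ is
regular) and `i < ω₁` above the countably many values `f_β (ξ₀ + n)`: then `f_β ≤ f_{α_i}` at
every coordinate `ξ₀ + n`, contradicting the finiteness of that set.

The statement involves six independent universes. Ordinals below `ω₂` have copies in every
universe, so Chang's property transfers from the universe of the hypothesis to that of `f`.
-/

open Cardinal Set

def IsClubIn (C : Set Ordinal) (δ : Ordinal) : Prop :=
  (∀ x ∈ C, x < δ) ∧ (∀ x < δ, ∃ y ∈ C, x ≤ y) ∧
  (∀ x, x < δ → x ≠ 0 → (∀ y < x, ∃ z ∈ C, y < z ∧ z < x) → x ∈ C)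

def HasOrderType (X : Set Ordinal) (α : Ordinal) : Prop :=
  ∃ g : Ordinal → Ordinal, StrictMonoOn g (Set.Iio α) ∧ X = g '' Set.Iio α

open scoped Ordinal

universe u v w u' v' w'

theorem StrictMonoOn.le_apply_of_mem_Iio {α : Type*} [LinearOrder α] [WellFoundedLT α]
    {f : α → α} {o : α} (hf : StrictMonoOn f (Iio o)) {x : α} (hx : x < o) : x ≤ f x := by
  induction x using WellFoundedLT.induction with
  | _ x ih =>
    by_contra! hfx
    exact (ih _ hfx (hfx.trans hx)).not_gt (hf (hfx.trans hx) hx hfx)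

theorem isClubIn_Iio (δ : Ordinal) : IsClubIn (Iio δ) δ :=
  ⟨fun _ hx => hx, fun x hx => ⟨x, hx, le_rfl⟩, fun _ hx _ _ => hx⟩

namespace Ordinal

theorem omega_one_lt_omega_two : ω₁ < ω_ 2 :=
  omega_lt_omega.2 one_lt_two

theorem exists_lt_forall_lt_of_lift_mk_lt_cof {ι : Type v} {f : ι → Ordinal.{u}}
    {a : Ordinal.{u}} (hι : Cardinal.lift.{u} #ι < (Ordinal.lift.{v} a).cof)
    (hf : ∀ i, f i < a) : ∃ b < a, ∀ i, f i < b := by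
  have hbdd : BddAbove (range fun i => f i + 1) := by
    refine ⟨a, ?_⟩
    rintro _ ⟨i, rfl⟩
    exact Order.add_one_le_of_lt (hf i)
  exact ⟨_, lift_iSup_add_one_lt_of_lt_cof hι hf,
    fun i => (lt_add_one (f i)).trans_le (le_ciSup hbdd i)⟩

theorem exists_lt_omega_one_forall_lt {ι : Type v} [Countable ι] {f : ι → Ordinal.{u}}
    (hf : ∀ i, f i < ω₁) : ∃ b < ω₁, ∀ i, f i < b := by
  refine exists_lt_forall_lt_of_lift_mk_lt_cof ?_ hf
  simp only [lift_omega, lift_one, cof_omega_one]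
  exact (Cardinal.lift_le.2 Cardinal.mk_le_aleph0).trans_lt (by simp)

theorem exists_lt_omega_one_forall_mem_lt {s : Set Ordinal.{u}} (hs : s.Countable)
    (h : ∀ x ∈ s, x < ω₁) : ∃ b < ω₁, ∀ x ∈ s, x < b := by
  have := hs.to_subtype
  obtain ⟨b, hb, hsb⟩ := exists_lt_omega_one_forall_lt fun x : s => h x x.2
  exact ⟨b, hb, fun x hx => hsb ⟨x, hx⟩⟩

theorem exists_lt_omega_two_forall_lt {ι : Type v} {f : ι → Ordinal.{u}} (hι : #ι ≤ ℵ₁)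
    (hf : ∀ i, f i < ω_ 2) : ∃ b < ω_ 2, ∀ i, f i < b := by
  refine exists_lt_forall_lt_of_lift_mk_lt_cof ?_ hf
  rw [lift_omega, lift_ofNat, ← one_add_one_eq_two, cof_omega_add_one, one_add_one_eq_two]
  exact (Cardinal.lift_le.2 hι).trans_lt (by simp)

/-- The copy in `Ordinal.{v}` of an ordinal of `Ordinal.{u}`: junk unless such a copy exists,
which is the case below `ω_ 2`. -/
noncomputable def transfer (a : Ordinal.{u}) : Ordinal.{v} :=
  Classical.epsilon fun b : Ordinal.{v} => lift.{u} b = lift.{v} a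

variable {a b : Ordinal.{u}}

theorem lift_transfer (ha : a < ω_ 2) : lift.{u} (transfer.{u, v} a) = lift.{v} a := by
  refine Classical.epsilon_spec (p := fun b : Ordinal.{v} => lift.{u} b = lift.{v} a) ?_
  refine mem_range_lift_of_le (a := (ω_ 2 : Ordinal.{v})) ?_
  rw [lift_omega, lift_ofNat, lift_le_omega_ofNat]
  exact ha.le

theorem transfer_lt_transfer_iff (ha : a < ω_ 2) (hb : b < ω_ 2) :
    transfer.{u, v} a < transfer.{u, v} b ↔ a < b := by
  rw [← lift_lt.{u}, lift_transfer ha, lift_transfer hb, lift_lt]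

theorem lt_transfer_iff {c : Ordinal.{v}} (ha : a < ω_ 2) (hc : c < ω_ 2) :
    a < transfer.{v, u} c ↔ transfer.{u, v} a < c := by
  rw [← lift_lt.{v}, lift_transfer hc, ← lift_lt.{u} (a := transfer a), lift_transfer ha]

theorem strictMonoOn_transfer : StrictMonoOn transfer.{u, v} (Iio (ω_ 2)) :=
  fun _ ha _ hb hab => (transfer_lt_transfer_iff ha hb).2 hab

theorem strictMonoOn_transfer_Iio_omega_one : StrictMonoOn transfer.{u, v} (Iio ω₁) :=
  strictMonoOn_transfer.mono (Iio_subset_Iio omega_one_lt_omega_two.le)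

theorem mapsTo_transfer_Iio_omega_two : MapsTo transfer.{u, v} (Iio (ω_ 2)) (Iio (ω_ 2)) := by
  intro a ha
  rw [mem_Iio, ← lift_lt_omega_ofNat.{_, u}, lift_transfer ha, lift_lt_omega_ofNat]
  exact ha

theorem mapsTo_transfer_Iio_omega_one : MapsTo transfer.{u, v} (Iio ω₁) (Iio ω₁) := by
  intro a ha
  rw [mem_Iio, ← lift_lt_omega_one.{_, u}, lift_transfer (ha.trans omega_one_lt_omega_two),
    lift_lt_omega_one]
  exact ha

end Ordinal

open Ordinal

/-- Chang's conjecture `(ω₂, ω₁) ↠ (ω₁, ω)` in coloring form, for the club `C = ω₂`; the set `S`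
of order type `ω₁` is `g '' Iio ω₁`. -/
def ChangColoringProperty : Prop :=
  ∀ c : Ordinal.{u} → Ordinal.{u} → Ordinal.{v}, (∀ α β, α < β → β < ω_ 2 → c α β < ω₁) →
    ∃ g : Ordinal.{w} → Ordinal.{u}, StrictMonoOn g (Iio ω₁) ∧ MapsTo g (Iio ω₁) (Iio (ω_ 2)) ∧
      ∃ ξ < ω₁, ∀ i j, i < j → j < ω₁ → c (g i) (g j) < ξ

theorem changColoringProperty_of_Iio
    (hCC : ∀ c : Ordinal.{u} → Ordinal.{u} → Ordinal.{v},
      (∀ α β, α ∈ Iio (ω_ 2) → β ∈ Iio (ω_ 2) → α < β → c α β < ω₁) →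
      ∃ S ⊆ Iio (ω_ 2), HasOrderType.{u, w} S ω₁ ∧
        ∃ ξ < ω₁, ∀ α β, α ∈ S → β ∈ S → α < β → c α β < ξ) :
    ChangColoringProperty.{u, v, w} := by
  intro c hc
  obtain ⟨S, hS, ⟨g, hg, rfl⟩, ξ, hξ, hcS⟩ := hCC c fun α β _ hβ hαβ => hc α β hαβ hβ
  exact ⟨g, hg, fun i hi => hS (mem_image_of_mem g hi), ξ, hξ, fun i j hij hj =>
    hcS _ _ (mem_image_of_mem g (hij.trans hj)) (mem_image_of_mem g hj) (hg (hij.trans hj) hj hij)⟩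

theorem ChangColoringProperty.transfer (hCC : ChangColoringProperty.{u, v, w}) :
    ChangColoringProperty.{u', v', w'} := by
  intro c hc
  obtain ⟨g, hg, hg₂, ξ, hξ, hcg⟩ := hCC
    (fun α β => Ordinal.transfer (c (Ordinal.transfer α) (Ordinal.transfer β)))
    fun α β hαβ hβ => mapsTo_transfer_Iio_omega_one
      (hc _ _ (strictMonoOn_transfer (hαβ.trans hβ) hβ hαβ) (mapsTo_transfer_Iio_omega_two hβ))
  have hT : MapsTo Ordinal.transfer.{w', w} (Iio ω₁) (Iio ω₁) := mapsTo_transfer_Iio_omega_one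
  have hgT₂ : MapsTo (g ∘ Ordinal.transfer.{w', w}) (Iio ω₁) (Iio (ω_ 2)) := hg₂.comp hT
  have hgT : StrictMonoOn (Ordinal.transfer ∘ g ∘ Ordinal.transfer.{w', w}) (Iio ω₁) :=
    strictMonoOn_transfer.comp (hg.comp strictMonoOn_transfer_Iio_omega_one hT) hgT₂
  refine ⟨_, hgT, mapsTo_transfer_Iio_omega_two.comp hgT₂, Ordinal.transfer ξ,
    mapsTo_transfer_Iio_omega_one hξ, fun i j hij hj => ?_⟩
  have hcij := (hc _ _ (hgT (hij.trans hj) hj hij)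
    (mapsTo_transfer_Iio_omega_two.comp hgT₂ hj)).trans omega_one_lt_omega_two
  exact (lt_transfer_iff hcij (hξ.trans omega_one_lt_omega_two)).2
    (hcg _ _ (strictMonoOn_transfer_Iio_omega_one (hij.trans hj) hj hij) (hT hj))

theorem exists_infinite_setOf_le_of_strictMonoOn {H : Ordinal.{w} → Ordinal.{v} → Ordinal.{w}}
    {ξ₀ : Ordinal.{v}} (hξ₀ : ξ₀ < ω₁)
    (hH : ∀ ξ, ξ₀ ≤ ξ → ξ < ω₁ → StrictMonoOn (H · ξ) (Iio ω₁))
    {h : Ordinal.{v} → Ordinal.{w}} (hh : ∀ ξ < ω₁, h ξ < ω₁) :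
    ∃ i < ω₁, {ξ | ξ < ω₁ ∧ h ξ ≤ H i ξ}.Infinite := by
  have hlt : ∀ n : ℕ, ξ₀ + n < ω₁ := (isSuccLimit_omega 1).add_natCast_lt hξ₀
  obtain ⟨i, hi, hhi⟩ := exists_lt_omega_one_forall_lt fun n => hh _ (hlt n)
  refine ⟨i, hi, infinite_of_injective_forall_mem (f := fun n : ℕ => ξ₀ + n)
    (fun m n hmn => by simpa using hmn) fun n => ⟨hlt n, ?_⟩⟩
  exact (hhi n).le.trans ((hH _ le_self_add (hlt n)).le_apply_of_mem_Iio hi)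

theorem ChangColoringProperty.not_increasing_mod_finite (hCC : ChangColoringProperty.{u, v, w})
    {f : Ordinal.{u} → Ordinal.{v} → Ordinal.{w}} (hf : ∀ α < ω_ 2, ∀ ξ < ω₁, f α ξ < ω₁) :
    ¬ ∀ α β, α < β → β < ω_ 2 → {ξ | ξ < ω₁ ∧ f β ξ ≤ f α ξ}.Finite := by
  intro hfin
  have hbound : ∀ α β, ∃ b < ω₁, α < β → β < ω_ 2 → ∀ ξ < ω₁, f β ξ ≤ f α ξ → ξ < b := by
    intro α β
    by_cases hαβ : α < β ∧ β < ω_ 2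
    · obtain ⟨b, hb, hb_gt⟩ := exists_lt_omega_one_forall_mem_lt
        (hfin α β hαβ.1 hαβ.2).countable fun ξ hξ => hξ.1
      exact ⟨b, hb, fun _ _ ξ hξ hle => hb_gt ξ ⟨hξ, hle⟩⟩
    · exact ⟨0, omega_pos 1, fun h h' => absurd ⟨h, h'⟩ hαβ⟩
  choose c hc hc_gt using hbound
  obtain ⟨g, hg, hg₂, ξ₀, hξ₀, hcg⟩ := hCC c fun α β _ _ => hc α β
  have hincr : ∀ ξ, ξ₀ ≤ ξ → ξ < ω₁ → StrictMonoOn (fun i => f (g i) ξ) (Iio ω₁) := by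
    intro ξ hξ₀ξ hξ i hi j hj hij
    by_contra! hle
    exact (hc_gt _ _ (hg hi hj hij) (hg₂ hj) ξ hξ hle).not_ge ((hcg i j hij hj).le.trans hξ₀ξ)
  obtain ⟨β, hβ, hgβ⟩ := exists_lt_omega_two_forall_lt (ι := Iio (ω₁ : Ordinal.{w}))
    (f := fun i => g i) (by simp) fun i => hg₂ i.2
  obtain ⟨i, hi, hinf⟩ := exists_infinite_setOf_le_of_strictMonoOn hξ₀ hincr (hf β hβ)
  exact hinf (hfin _ _ (hgβ ⟨i, hi⟩) hβ)

theorem stmt3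
    (hCC : ∀ C, IsClubIn C (aleph 2).ord →
      ∀ c : Ordinal → Ordinal → Ordinal,
        (∀ α β, α ∈ C → β ∈ C → α < β → c α β < (aleph 1).ord) →
        ∃ S ⊆ C, HasOrderType S (aleph 1).ord ∧
          ∃ ξ < (aleph 1).ord, ∀ α β, α ∈ S → β ∈ S → α < β → c α β < ξ) :
    ¬ ∃ f : Ordinal → Ordinal → Ordinal,
      (∀ α, α < (aleph 2).ord → ∀ ξ < (aleph 1).ord, f α ξ < (aleph 1).ord) ∧
      (∀ α β, α < β → β < (aleph 2).ord →
        {ξ | ξ < (aleph 1).ord ∧ f β ξ ≤ f α ξ}.Finite) := by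
  simp only [ord_aleph] at hCC ⊢
  rintro ⟨f, hf, hfin⟩
  have hChang := (changColoringProperty_of_Iio (hCC _ (isClubIn_Iio _))).transfer
  exact hChang.not_increasing_mod_finite hf hfin
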